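/- Let {C_1,…,C_k} be an (α,γ)-clustering of X, let i ≠ j, and let x, y ∈ C_i. Then d(x,y) ≤ (2/(γ−1))·Δ(x,C_j). -/

import Mathlib

/-!
By the triangle inequality averaged over `C_i`, `d(x,y) ≤ Δ(x,C_i) + Δ(y,C_i)`, and the
separation condition bounds the right side by `(Δ(x,C_j) + Δ(y,C_j)) / γ`. Averaging the
triangle inequality over `C_j` instead gives `Δ(y,C_j) ≤ d(x,y) + Δ(x,C_j)`, so
`γ·d(x,y) ≤ d(x,y) + 2·Δ(x,C_j)`.
-/

open Finset

/-- `P(A)`: the probability mass of a finite set `A`. -/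
noncomputable def pOf {X : Type*} (P : X → ℝ) (A : Finset X) : ℝ := ∑ x ∈ A, P x

/-- `Δ(x,A)`: the average distance from `x` to `A`,
weighted by the probability mass function `P` restricted to `A`. -/
noncomputable def Dpt {X : Type*} [MetricSpace X] (P : X → ℝ) (x : X) (A : Finset X) : ℝ :=
  (∑ y ∈ A, P y * dist x y) / pOf P A

/-- `{C_1,…,C_k}` is an `(α,γ)`-clustering: a partition of `X` into nonempty parts, each of
probability at least `α`, such that `Δ(x,C_j) ≥ γ·Δ(x,C_i)` for all `i ≠ j` and `x ∈ C_i`. -/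
def IsGoodClustering {X : Type*} [Fintype X] [MetricSpace X] (P : X → ℝ) (α γ : ℝ)
    {k : ℕ} (C : Fin k → Finset X) : Prop :=
  (∀ i, (C i).Nonempty) ∧
  (∀ i j, i ≠ j → Disjoint (C i) (C j)) ∧
  (∀ x : X, ∃ i, x ∈ C i) ∧
  (∀ i, α ≤ pOf P (C i)) ∧
  (∀ i j, i ≠ j → ∀ x ∈ C i, γ * Dpt P x (C i) ≤ Dpt P x (C j))

section Average

variable {X : Type*} {P : X → ℝ} {A : Finset X}

lemma pOf_pos (hP : ∀ z ∈ A, 0 < P z) (hA : A.Nonempty) : 0 < pOf P A :=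
  sum_pos hP hA

variable [MetricSpace X]

lemma dist_le_Dpt_add (hP : ∀ z ∈ A, 0 ≤ P z) (hA : 0 < pOf P A) (x y : X) :
    dist x y ≤ Dpt P x A + Dpt P y A := by
  rw [Dpt, Dpt, ← add_div, le_div_iff₀ hA, pOf, mul_sum, ← sum_add_distrib]
  gcongr with z hz
  rw [← mul_add, mul_comm]
  exact mul_le_mul_of_nonneg_left (dist_triangle_right x y z) (hP z hz)

lemma Dpt_le_dist_add (hP : ∀ z ∈ A, 0 ≤ P z) (hA : 0 < pOf P A) (x y : X) :
    Dpt P y A ≤ dist x y + Dpt P x A := by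
  rw [Dpt, Dpt, div_le_iff₀ hA, add_mul, div_mul_cancel₀ _ hA.ne', pOf, mul_sum,
    ← sum_add_distrib]
  gcongr with z hz
  rw [mul_comm _ (P z), ← mul_add, dist_comm x y]
  exact mul_le_mul_of_nonneg_left (dist_triangle y x z) (hP z hz)

end Average

theorem stmt_2_general {X : Type*} [Fintype X] [MetricSpace X]
    (P : X → ℝ) (hP : ∀ x, 0 < P x)
    (α γ : ℝ) (hγ : 1 < γ)
    {k : ℕ} (C : Fin k → Finset X) (hC : IsGoodClustering P α γ C)
    (i j : Fin k) (hij : i ≠ j) (x y : X) (hx : x ∈ C i) (hy : y ∈ C i) :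
    dist x y ≤ (2 / (γ - 1)) * Dpt P x (C j) := by
  obtain ⟨hne, -, -, -, hsep⟩ := hC
  have hP₀ (A : Finset X) : ∀ z ∈ A, 0 ≤ P z := fun z _ ↦ (hP z).le
  have hCpos (l : Fin k) : 0 < pOf P (C l) := pOf_pos (fun z _ ↦ hP z) (hne l)
  have hxy := dist_le_Dpt_add (hP₀ _) (hCpos i) x y
  have hyx := Dpt_le_dist_add (hP₀ _) (hCpos j) x y
  have hγxy := mul_le_mul_of_nonneg_left hxy (by linarith : (0 : ℝ) ≤ γ)
  rw [div_mul_eq_mul_div, le_div_iff₀ (sub_pos.2 hγ)]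
  linarith [hsep i j hij x hx, hsep i j hij y hy]

/-- In an `(α,γ)`-clustering, for `x, y ∈ C_i` and `j ≠ i`,
`d(x,y) ≤ (2/(γ−1))·Δ(x,C_j)`. -/
theorem stmt_2 {X : Type*} [Fintype X] [MetricSpace X]
    (P : X → ℝ) (hP : ∀ x, 0 < P x) (hsum : ∑ x, P x = 1)
    (α γ : ℝ) (hα : 0 < α) (hγ : 1 < γ)
    {k : ℕ} (C : Fin k → Finset X) (hC : IsGoodClustering P α γ C)
    (i j : Fin k) (hij : i ≠ j) (x y : X) (hx : x ∈ C i) (hy : y ∈ C i) :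
    dist x y ≤ (2 / (γ - 1)) * Dpt P x (C j) :=
  stmt_2_general P hP α γ hγ C hC i j hij x y hx hy
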